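/- Both invariants of the autonomous d₄P^(II) map are unchanged by the reversal involution ι: for all a, b, c, d, x, y, z, u in ℂ, Δ₆(u, z, y, x) = Δ₆(x, y, z, u) and Δ₈(u, z, y, x) = Δ₈(x, y, z, u). -/
import Mathlib


/-- The degree-six invariant `Δ₆` of the autonomous `d₄P^(II)` map, in affine coordinates. -/
noncomputable def Δ₆ (a b c d x y z u : ℂ) : ℂ :=
  a * (1 - z^2) * (1 - y^2) * (u*x - u*z - x*y - y*z)
    - b * (z^2 + y^2 - z^2*y^2) - c * y * z + d * (z + y)

/-- The degree-eight invariant `Δ₈` of the autonomous `d₄P^(II)` map, in affine coordinates. -/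
noncomputable def Δ₈ (a b c d x y z u : ℂ) : ℂ :=
  a * ((u^2 + z^2 + y^2 + x^2)
        - z^2 * y^2 * (u*z + x*y + y*z)^2
        - (2*y*u*z^2 + 2*u*z*x*y + x^2*z^2 + 2*x*z*y^2 + 2*x^2*y^2 + u^2*y^2
            + 2*z^2*y^2 + 2*u^2*z^2)
        + (2*x^2*y^2*z^2 + 2*u*y^3*z^2 + 2*x*y^2*z^3 + 2*y*u*z^4 + z^2*y^4
            + y^2*z^4 + 2*u^2*y^2*z^2 + x^2*y^4 + 2*u*x*y^3*z + 2*u*x*y*z^3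
            + 2*x*z*y^4 + z^4*u^2))
    + b * (1 - z^2) * (1 - y^2) * (z + x) * (u + y)
    + c * (x*z - z^2*y^2 + y*u - y*u*z^2 - x*z*y^2)
    - d * (x + z - z*y^2 - x*y^2 - u*z^2 + u - y*z^2 + y)

/-- Both invariants of the autonomous `d₄P^(II)` map are unchanged by the reversal
involution `ι : (x, y, z, u) ↦ (u, z, y, x)`. -/
theorem d4PII_invariants_reversal_symmetric (a b c d x y z u : ℂ) :
    Δ₆ a b c d u z y x = Δ₆ a b c d x y z u ∧
    Δ₈ a b c d u z y x = Δ₈ a b c d x y z u := by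
  exact ⟨by simp only [Δ₆]; ring, by simp only [Δ₈]; ring⟩
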